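/- Let p_1 ≤ p_2 ≤ p_3 ≤ p_4 ≤ p_5 be nonnegative integers with p_2 = p_3 = p_4 = p_5 − 1, and suppose n satisfies binom(n+2,2) = Σ_{i=1}^5 binom(p_i+2,2). Then the Hermite interpolation scheme on 5 nodes in ℝ² is singular: for every choice of pairwise distinct points X_1, …, X_5 ∈ ℝ², the interpolation problem on Π_n^2 is not regular, i.e., there exists a nonzero polynomial f in two variables of total degree at most n such that ∂^α f(X_q) = 0 for all 1 ≤ q ≤ 5 and all multi-indices α ∈ ℕ² with |α| ≤ p_q. -/
import Mathlib

open MvPolynomial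

/-- The iterated partial derivative `∂^α` as a linear endomorphism of `ℝ[x_1,…,x_d]`. -/
noncomputable def pderivPow {d : ℕ} (α : Fin d → ℕ) :
    Module.End ℝ (MvPolynomial (Fin d) ℝ) :=
  ((List.finRange d).map fun i => ((MvPolynomial.pderiv i).toLinearMap ^ α i)).prod

/-- The Hermite ideal `I(X,p)`, as a set: all polynomials whose partial derivatives of
order up to `p q` all vanish at `X q`, for every `q`. -/
def hermiteSet {d m : ℕ} (X : Fin m → (Fin d → ℝ)) (p : Fin m → ℕ) :
    Set (MvPolynomial (Fin d) ℝ) :=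
  {f | ∀ q, ∀ α : Fin d → ℕ, (∑ i, α i) ≤ p q → MvPolynomial.eval (X q) (pderivPow α f) = 0}

/-! ### The maximal ideal of a point, and vanishing of derivatives -/

/-- The maximal ideal at a point `P ∈ ℝ²`. -/
noncomputable def ptIdeal (P : Fin 2 → ℝ) : Ideal (MvPolynomial (Fin 2) ℝ) :=
  Ideal.span {X 0 - C (P 0), X 1 - C (P 1)}

lemma mem_ptIdeal_of_eval_eq_zero {P : Fin 2 → ℝ} {f : MvPolynomial (Fin 2) ℝ}
    (h : eval P f = 0) : f ∈ ptIdeal P := by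
  have key : ∀ g : MvPolynomial (Fin 2) ℝ, g - C (eval P g) ∈ ptIdeal P := by
    intro g
    induction g using MvPolynomial.induction_on with
    | C a => simp only [eval_C, sub_self]; exact (ptIdeal P).zero_mem
    | add p q hp hq =>
        have := (ptIdeal P).add_mem hp hq
        simpa [sub_add_sub_comm] using this
    | mul_X p i hp =>
        have h1 : p * X i - C (eval P p * P i)
            = p * (X i - C (P i)) + (p - C (eval P p)) * C (P i) := by
          rw [C_mul]; ring
        rw [map_mul, eval_X, h1]
        refine (ptIdeal P).add_mem (Ideal.mul_mem_left _ _ ?_) (Ideal.mul_mem_right _ _ hp)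
        fin_cases i
        · exact Ideal.subset_span (Or.inl rfl)
        · exact Ideal.subset_span (Or.inr rfl)
  have := key f
  rwa [h, map_zero, sub_zero] at this

lemma eval_eq_zero_of_mem_ptIdeal {P : Fin 2 → ℝ} {f : MvPolynomial (Fin 2) ℝ}
    (h : f ∈ ptIdeal P) : eval P f = 0 := by
  have : ptIdeal P ≤ RingHom.ker (eval P) := by
    rw [ptIdeal, Ideal.span_le]
    rintro g (rfl | rfl) <;> simp [RingHom.mem_ker]
  exact this h

lemma pderiv_mem_pow {P : Fin 2 → ℝ} {k : ℕ} {f : MvPolynomial (Fin 2) ℝ}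
    (h : f ∈ ptIdeal P ^ k) (i : Fin 2) : pderiv i f ∈ ptIdeal P ^ (k - 1) := by
  induction k generalizing f with
  | zero => simp
  | succ k ih =>
      rw [pow_succ] at h
      simp only [Nat.add_sub_cancel]
      induction h using Submodule.mul_induction_on' with
      | mem_mul_mem a ha b hb =>
          rw [pderiv_mul]
          rcases Nat.eq_zero_or_pos k with rfl | hk
          · simp
          · refine Ideal.add_mem _ ?_ (Ideal.mul_mem_right _ _ ha)
            have h2 : pderiv i a * b ∈ ptIdeal P ^ (k-1) * ptIdeal P :=
              Ideal.mul_mem_mul (ih ha) hb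
            rwa [← pow_succ, Nat.sub_add_cancel hk] at h2
      | add x hx y hy ihx ihy =>
          rw [map_add]; exact Ideal.add_mem _ ihx ihy

lemma pderiv_iter_mem_pow {P : Fin 2 → ℝ} {k : ℕ} {f : MvPolynomial (Fin 2) ℝ}
    (h : f ∈ ptIdeal P ^ k) (i : Fin 2) (m : ℕ) :
    ((pderiv i).toLinearMap ^ m) f ∈ ptIdeal P ^ (k - m) := by
  induction m generalizing k f with
  | zero => simpa using h
  | succ m ih =>
      have h1 : ((pderiv i).toLinearMap ^ (m+1)) f
          = ((pderiv i).toLinearMap ^ m) (pderiv i f) := by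
        rw [pow_succ, Module.End.mul_apply]; rfl
      rw [h1]
      have := ih (pderiv_mem_pow h i)
      rwa [show k - 1 - m = k - (m+1) by omega] at this

lemma pderivPow_apply (α : Fin 2 → ℕ) (f : MvPolynomial (Fin 2) ℝ) :
    pderivPow α f
      = ((pderiv (0:Fin 2)).toLinearMap ^ α 0) (((pderiv (1:Fin 2)).toLinearMap ^ α 1) f) := by
  have h2 : List.finRange 2 = [0, 1] := by decide
  simp [pderivPow, h2, Module.End.mul_apply]

lemma eval_pderivPow_eq_zero {P : Fin 2 → ℝ} {k : ℕ} {f : MvPolynomial (Fin 2) ℝ}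
    (h : f ∈ ptIdeal P ^ k) (α : Fin 2 → ℕ) (hα : α 0 + α 1 < k) :
    eval P (pderivPow α f) = 0 := by
  rw [pderivPow_apply]
  have h1 := pderiv_iter_mem_pow (pderiv_iter_mem_pow h 1 (α 1)) 0 (α 0)
  have h2 : pderivPow α f ∈ ptIdeal P := by
    rw [pderivPow_apply]
    exact Ideal.pow_le_self (by omega) h1
  rw [← pderivPow_apply]
  exact eval_eq_zero_of_mem_ptIdeal h2

/-! ### Lines through two points -/

noncomputable def linePoly (P P' : Fin 2 → ℝ) : MvPolynomial (Fin 2) ℝ :=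
  monomial (Finsupp.single 0 1) (P' 1 - P 1) + monomial (Finsupp.single 1 1) (P 0 - P' 0)
    + C ((P' 0 - P 0) * P 1 - (P' 1 - P 1) * P 0)

lemma eval_linePoly (P P' Y : Fin 2 → ℝ) :
    eval Y (linePoly P P') = (P' 1 - P 1) * Y 0 + (P 0 - P' 0) * Y 1
      + ((P' 0 - P 0) * P 1 - (P' 1 - P 1) * P 0) := by
  simp [linePoly, eval_monomial]
  ring

lemma linePoly_mem_left (P P' : Fin 2 → ℝ) : linePoly P P' ∈ ptIdeal P :=
  mem_ptIdeal_of_eval_eq_zero (by rw [eval_linePoly]; ring)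

lemma linePoly_mem_right (P P' : Fin 2 → ℝ) : linePoly P P' ∈ ptIdeal P' :=
  mem_ptIdeal_of_eval_eq_zero (by rw [eval_linePoly]; ring)

lemma linePoly_ne_zero {P P' : Fin 2 → ℝ} (h : P ≠ P') : linePoly P P' ≠ 0 := by
  have : P 0 ≠ P' 0 ∨ P 1 ≠ P' 1 := by
    by_contra hc
    push_neg at hc
    exact h (funext fun i => by fin_cases i <;> [exact hc.1; exact hc.2])
  intro h0
  have e1 : ¬(Finsupp.single (0:Fin 2) 1 = Finsupp.single 1 1) := by
    intro h
    have := DFunLike.congr_fun h 0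
    simp [Finsupp.single_apply] at this
  have e2 : ¬(Finsupp.single (1:Fin 2) 1 = Finsupp.single 0 1) := by
    intro h
    have := DFunLike.congr_fun h 0
    simp [Finsupp.single_apply] at this
  have e3 : ¬((0 : Fin 2 →₀ ℕ) = Finsupp.single (1:Fin 2) 1) := by
    intro h
    have := DFunLike.congr_fun h 1
    simp [Finsupp.single_apply] at this
  have e4 : ¬((0 : Fin 2 →₀ ℕ) = Finsupp.single (0:Fin 2) 1) := by
    intro h
    have := DFunLike.congr_fun h 0
    simp [Finsupp.single_apply] at this
  rcases this with h1 | h1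
  · have hc := congrArg (coeff (Finsupp.single 1 1)) h0
    rw [linePoly, coeff_add, coeff_add, coeff_monomial, coeff_monomial, coeff_C,
      if_neg e1, if_pos rfl, if_neg e3, coeff_zero] at hc
    exact h1 (by linarith)
  · have hc := congrArg (coeff (Finsupp.single 0 1)) h0
    rw [linePoly, coeff_add, coeff_add, coeff_monomial, coeff_monomial, coeff_C,
      if_pos rfl, if_neg e2, if_neg e4, coeff_zero] at hc
    exact h1 (by linarith)

lemma linePoly_totalDegree_le (P P' : Fin 2 → ℝ) : (linePoly P P').totalDegree ≤ 1 := by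
  refine le_trans (totalDegree_add _ _) (max_le (le_trans (totalDegree_add _ _) (max_le ?_ ?_)) ?_)
  · exact le_trans (totalDegree_monomial_le _ _) (by simp)
  · exact le_trans (totalDegree_monomial_le _ _) (by simp)
  · exact le_trans (le_of_eq (totalDegree_C _)) (Nat.zero_le 1)

/-! ### A conic through five points -/

/-- Exponents of the six monomials of degree at most 2 in two variables. -/
noncomputable def conicExp : Fin 6 → (Fin 2 →₀ ℕ)
  | ⟨0, _⟩ => 0
  | ⟨1, _⟩ => Finsupp.single 0 1
  | ⟨2, _⟩ => Finsupp.single 1 1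
  | ⟨3, _⟩ => Finsupp.single 0 2
  | ⟨4, _⟩ => Finsupp.single 0 1 + Finsupp.single 1 1
  | ⟨5, _⟩ => Finsupp.single 1 2

def conicTable : Fin 6 → ℕ × ℕ
  | ⟨0, _⟩ => (0,0)
  | ⟨1, _⟩ => (1,0)
  | ⟨2, _⟩ => (0,1)
  | ⟨3, _⟩ => (2,0)
  | ⟨4, _⟩ => (1,1)
  | ⟨5, _⟩ => (0,2)

lemma conicExp_pair : ∀ j : Fin 6, (conicExp j 0, conicExp j 1) = conicTable j := by
  intro j
  fin_cases j <;>
    simp [conicExp, conicTable, Finsupp.single_apply]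

lemma conicExp_injective : Function.Injective conicExp := by
  have key : ∀ j k : Fin 6, conicTable j = conicTable k → j = k := by decide
  intro j k h
  exact key j k (by rw [← conicExp_pair j, ← conicExp_pair k, h])

lemma conicExp_degree (j : Fin 6) : ((conicExp j).sum fun _ e => e) ≤ 2 := by
  fin_cases j <;>
    simp [conicExp, Finsupp.sum_add_index, Finsupp.sum_single_index]

lemma exists_conic (X : Fin 5 → (Fin 2 → ℝ)) :
    ∃ Q : MvPolynomial (Fin 2) ℝ, Q ≠ 0 ∧ Q.totalDegree ≤ 2 ∧ ∀ q, Q ∈ ptIdeal (X q) := by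
  set M : Matrix (Fin 5) (Fin 6) ℝ :=
    fun q j => (conicExp j).prod fun i e => X q i ^ e with hM
  have hker : LinearMap.ker M.mulVecLin ≠ ⊥ := by
    intro hbot
    have h1 := LinearMap.finrank_range_add_finrank_ker M.mulVecLin
    rw [hbot] at h1
    have h2 : Module.finrank ℝ (LinearMap.range M.mulVecLin)
        ≤ Module.finrank ℝ (Fin 5 → ℝ) := Submodule.finrank_le _
    simp [finrank_bot] at h1
    simp at h2
    omega
  obtain ⟨c, hc, hc0⟩ := (Submodule.ne_bot_iff _).mp hker
  refine ⟨∑ j, monomial (conicExp j) (c j), ?_, ?_, ?_⟩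
  · -- nonzero
    intro h0
    obtain ⟨j, hj⟩ : ∃ j, c j ≠ 0 := by
      by_contra hc'
      push_neg at hc'
      exact hc0 (funext hc')
    have := congrArg (coeff (conicExp j)) h0
    rw [coeff_sum] at this
    rw [Finset.sum_eq_single j] at this
    · simp [coeff_monomial] at this
      exact hj this
    · intro k _ hk
      rw [coeff_monomial, if_neg (fun he => hk (conicExp_injective he))]
    · simp
  · refine le_trans (totalDegree_finset_sum _ _) (Finset.sup_le fun j _ => ?_)
    exact le_trans (totalDegree_monomial_le _ _) (conicExp_degree j)
  · intro q
    refine mem_ptIdeal_of_eval_eq_zero ?_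
    have hLc := congrFun hc q
    simp only [Matrix.mulVecLin_apply, Matrix.mulVec, dotProduct, Pi.zero_apply] at hLc
    rw [map_sum]
    rw [← hLc]
    refine Finset.sum_congr rfl fun j _ => ?_
    rw [eval_monomial, hM]
    ring

/-! ### Arithmetic -/

lemma two_mul_choose (k : ℕ) : 2 * Nat.choose (k + 2) 2 = (k + 1) * (k + 2) := by
  induction k with
  | zero => rfl
  | succ k ih =>
      have : k + 1 + 2 = (k + 2) + 1 := rfl
      rw [this, Nat.choose_succ_succ, Nat.choose_one_right, Nat.mul_add, ih]
      ring

lemma arith_key {n a b : ℕ} (hab : a ≤ b)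
    (h : (n + 1) * (n + 2) = (a + 1) * (a + 2) + (b + 2) * (4 * b + 6)) :
    2 * n ≤ a + 4 * b + 6 ∧ 2 * b + 3 ≤ n := by
  constructor
  · by_contra hc
    push_neg at hc
    have h7 : a + 4 * b + 7 ≤ 2 * n := by omega
    nlinarith [Nat.mul_le_mul_left a hab, sq_nonneg a, sq_nonneg b]
  · by_contra hc
    push_neg at hc
    have h7 : n ≤ 2 * b + 2 := by omega
    nlinarith [sq_nonneg a]

/-! ### Assembly helpers -/

lemma mem_pow_mul {I : Ideal (MvPolynomial (Fin 2) ℝ)} {x y : MvPolynomial (Fin 2) ℝ}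
    {s t : ℕ} (hx : x ∈ I ^ s) (hy : y ∈ I ^ t) : x * y ∈ I ^ (s + t) := by
  rw [pow_add]; exact Ideal.mul_mem_mul hx hy

lemma mem_pow_zero (I : Ideal (MvPolynomial (Fin 2) ℝ)) (x : MvPolynomial (Fin 2) ℝ) :
    x ∈ I ^ 0 := by simp [Ideal.one_eq_top]

/-- Hermite interpolation on 5 nodes in `ℝ²` with `p_2 = p_3 = p_4 = p_5 - 1` is singular. -/
theorem singular_five_nodes_case_ii {n : ℕ} (p : Fin 5 → ℕ) (hmono : Monotone p)
    (hcase : p 1 = p 2 ∧ p 2 = p 3 ∧ p 3 + 1 = p 4)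
    (hdim : Nat.choose (n + 2) 2 = ∑ q, Nat.choose (p q + 2) 2)
    (X : Fin 5 → (Fin 2 → ℝ)) (hX : Function.Injective X) :
    ∃ f : MvPolynomial (Fin 2) ℝ, f ≠ 0 ∧ f.totalDegree ≤ n ∧ f ∈ hermiteSet X p := by
  obtain ⟨h12, h23, h34⟩ := hcase
  set a := p 0 with ha
  set b := p 1 with hb
  have hp2 : p 2 = b := h12.symm
  have hp3 : p 3 = b := by omega
  have hp4 : p 4 = b + 1 := by omega
  have hab : a ≤ b := hmono (by norm_num : (0:Fin 5) ≤ 1)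
  -- convert the dimension hypothesis
  have hdim2 : (n + 1) * (n + 2) = (a + 1) * (a + 2) + (b + 2) * (4 * b + 6) := by
    have hs : 2 * Nat.choose (n+2) 2 = 2 * Nat.choose (a+2) 2 + 2 * Nat.choose (b+2) 2
        + 2 * Nat.choose (b+2) 2 + 2 * Nat.choose (b+2) 2 + 2 * Nat.choose (b+1+2) 2 := by
      rw [hdim, Fin.sum_univ_five, hp2, hp3, hp4]; ring
    rw [two_mul_choose n, two_mul_choose a, two_mul_choose b, two_mul_choose (b+1)] at hs
    rw [hs]; ring
  obtain ⟨h1, h2⟩ := arith_key hab hdim2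
  -- the parameters
  obtain ⟨t, ht⟩ : ∃ t, a + 4 * b + 6 = 2 * n + t := ⟨a + 4*b + 6 - 2*n, by omega⟩
  obtain ⟨w, hw⟩ : ∃ w, n = 2 * b + 3 + w := ⟨n - (2*b+3), by omega⟩
  obtain ⟨d, hd⟩ : ∃ d, n = a + b + 2 + d := ⟨n - (a+b+2), by omega⟩
  -- the conic and the lines
  obtain ⟨Q, hQ0, hQdeg, hQmem⟩ := exists_conic X
  set L04 := linePoly (X 0) (X 4) with hL04
  set L01 := linePoly (X 0) (X 1) with hL01
  set L02 := linePoly (X 0) (X 2) with hL02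
  set L13 := linePoly (X 1) (X 3) with hL13
  set L24 := linePoly (X 2) (X 4) with hL24
  set L34 := linePoly (X 3) (X 4) with hL34
  set F := Q ^ t * L04 * L01 ^ w * L02 ^ w * L13 ^ d * L24 ^ d * L34 ^ w with hF
  have hall : ∀ q, F ∈ ptIdeal (X q) ^ (p q + 1) := by
    intro q
    fin_cases q
    · show F ∈ ptIdeal (X 0) ^ (p 0 + 1)
      rw [show p 0 + 1 = t + 1 + w + w + 0 + 0 + 0 from by omega, hF]
      exact mem_pow_mul (mem_pow_mul (mem_pow_mul (mem_pow_mul (mem_pow_mul (mem_pow_mul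
        (Ideal.pow_mem_pow (hQmem 0) t) (by simpa using Ideal.pow_mem_pow (linePoly_mem_left _ _) 1))
        (Ideal.pow_mem_pow (linePoly_mem_left _ _) w))
        (Ideal.pow_mem_pow (linePoly_mem_left _ _) w))
        (mem_pow_zero _ _)) (mem_pow_zero _ _)) (mem_pow_zero _ _)
    · show F ∈ ptIdeal (X 1) ^ (p 1 + 1)
      rw [show p 1 + 1 = t + 0 + w + 0 + d + 0 + 0 from by omega, hF]
      exact mem_pow_mul (mem_pow_mul (mem_pow_mul (mem_pow_mul (mem_pow_mul (mem_pow_mul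
        (Ideal.pow_mem_pow (hQmem 1) t) (mem_pow_zero _ _))
        (Ideal.pow_mem_pow (linePoly_mem_right _ _) w))
        (mem_pow_zero _ _))
        (Ideal.pow_mem_pow (linePoly_mem_left _ _) d)) (mem_pow_zero _ _)) (mem_pow_zero _ _)
    · show F ∈ ptIdeal (X 2) ^ (p 2 + 1)
      rw [show p 2 + 1 = t + 0 + 0 + w + 0 + d + 0 from by omega, hF]
      exact mem_pow_mul (mem_pow_mul (mem_pow_mul (mem_pow_mul (mem_pow_mul (mem_pow_mul
        (Ideal.pow_mem_pow (hQmem 2) t) (mem_pow_zero _ _))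
        (mem_pow_zero _ _))
        (Ideal.pow_mem_pow (linePoly_mem_right _ _) w))
        (mem_pow_zero _ _)) (Ideal.pow_mem_pow (linePoly_mem_left _ _) d)) (mem_pow_zero _ _)
    · show F ∈ ptIdeal (X 3) ^ (p 3 + 1)
      rw [show p 3 + 1 = t + 0 + 0 + 0 + d + 0 + w from by omega, hF]
      exact mem_pow_mul (mem_pow_mul (mem_pow_mul (mem_pow_mul (mem_pow_mul (mem_pow_mul
        (Ideal.pow_mem_pow (hQmem 3) t) (mem_pow_zero _ _))
        (mem_pow_zero _ _))
        (mem_pow_zero _ _))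
        (Ideal.pow_mem_pow (linePoly_mem_right _ _) d)) (mem_pow_zero _ _))
        (Ideal.pow_mem_pow (linePoly_mem_left _ _) w)
    · show F ∈ ptIdeal (X 4) ^ (p 4 + 1)
      rw [show p 4 + 1 = t + 1 + 0 + 0 + 0 + d + w from by omega, hF]
      exact mem_pow_mul (mem_pow_mul (mem_pow_mul (mem_pow_mul (mem_pow_mul (mem_pow_mul
        (Ideal.pow_mem_pow (hQmem 4) t)
        (by simpa using Ideal.pow_mem_pow (linePoly_mem_right _ _) 1))
        (mem_pow_zero _ _))
        (mem_pow_zero _ _))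
        (mem_pow_zero _ _)) (Ideal.pow_mem_pow (linePoly_mem_right _ _) d))
        (Ideal.pow_mem_pow (linePoly_mem_right _ _) w)
  refine ⟨F, ?_, ?_, ?_⟩
  · -- nonzero
    have hne : ∀ i j : Fin 5, i ≠ j → X i ≠ X j := fun i j hij => fun h => hij (hX h)
    rw [hF, hL04, hL01, hL02, hL13, hL24, hL34]
    refine mul_ne_zero (mul_ne_zero (mul_ne_zero (mul_ne_zero (mul_ne_zero (mul_ne_zero
      (pow_ne_zero _ hQ0) ?_) (pow_ne_zero _ ?_)) (pow_ne_zero _ ?_)) (pow_ne_zero _ ?_))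
      (pow_ne_zero _ ?_)) (pow_ne_zero _ ?_) <;>
      exact linePoly_ne_zero (hne _ _ (by decide))
  · -- total degree
    calc F.totalDegree
        ≤ t * 2 + 1 + w * 1 + w * 1 + d * 1 + d * 1 + w * 1 := by
          rw [hF]
          refine le_trans (totalDegree_mul _ _) (add_le_add ?_ ?_)
          rotate_left
          · exact le_trans (totalDegree_pow _ _) (Nat.mul_le_mul_left _ (linePoly_totalDegree_le _ _))
          refine le_trans (totalDegree_mul _ _) (add_le_add ?_ ?_)
          rotate_left
          · exact le_trans (totalDegree_pow _ _) (Nat.mul_le_mul_left _ (linePoly_totalDegree_le _ _))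
          refine le_trans (totalDegree_mul _ _) (add_le_add ?_ ?_)
          rotate_left
          · exact le_trans (totalDegree_pow _ _) (Nat.mul_le_mul_left _ (linePoly_totalDegree_le _ _))
          refine le_trans (totalDegree_mul _ _) (add_le_add ?_ ?_)
          rotate_left
          · exact le_trans (totalDegree_pow _ _) (Nat.mul_le_mul_left _ (linePoly_totalDegree_le _ _))
          refine le_trans (totalDegree_mul _ _) (add_le_add ?_ ?_)
          rotate_left
          · exact le_trans (totalDegree_pow _ _) (Nat.mul_le_mul_left _ (linePoly_totalDegree_le _ _))
          refine le_trans (totalDegree_mul _ _) (add_le_add ?_ ?_)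
          · exact le_trans (totalDegree_pow _ _) (Nat.mul_le_mul_left _ hQdeg)
          · exact linePoly_totalDegree_le _ _
      _ ≤ n := by omega
  · -- hermite conditions
    intro q α hα
    rw [Fin.sum_univ_two] at hα
    exact eval_pderivPow_eq_zero (hall q) α (by omega)
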